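/- arXiv:2102.00471 — 8 statements merged into one kernel-verified Lean document; each statement's English description precedes it below -/
import Mathlib

section
/- Let f : H → ℝ be a convex function on a real Hilbert space H, let 0 ≤ ε ≤ r, and suppose the sublevel set S_{f+r} := {x : f(x) + r ≤ 0} is nonempty. Then for every x ∈ H with f(x) > 0, one has d(x, S_{f+ε})/(f(x)+ε) ≤ d(x, S_{f+r})/(f(x)+r), where d(x,S) denotes the distance from x to the set S. -/
open Metric

theorem sublevel_erosion_ratio
    {H : Type*} [NormedAddCommGroup H] [InnerProductSpace ℝ H]
    (f : H → ℝ) (hf : ConvexOn ℝ Set.univ f)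
    (ε r : ℝ) (hε : 0 ≤ ε) (hεr : ε ≤ r)
    (hS : ({y : H | f y + r ≤ 0}).Nonempty)
    (x : H) (hx : 0 < f x) :
    infDist x {y : H | f y + ε ≤ 0} / (f x + ε) ≤
      infDist x {y : H | f y + r ≤ 0} / (f x + r) := by
  have ha0 : 0 < f x + ε := by linarith
  have hb0 : 0 < f x + r := by linarith
  set t : ℝ := (f x + ε) / (f x + r) with htdef
  have ht0 : 0 < t := div_pos ha0 hb0
  have ht1 : t ≤ 1 := (div_le_one hb0).2 (by linarith)
  have key : infDist x {y : H | f y + ε ≤ 0} ≤ t * infDist x {y : H | f y + r ≤ 0} := by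
    rw [mul_comm, ← div_le_iff₀ ht0]
    by_contra hcon
    push_neg at hcon
    rw [infDist_lt_iff hS] at hcon
    obtain ⟨z, hz, hzlt⟩ := hcon
    rw [lt_div_iff₀ ht0] at hzlt
    apply absurd hzlt
    push_neg
    -- the convex combination
    set y : H := (1 - t) • x + t • z with hydef
    have hy : f y + ε ≤ 0 := by
      have := hf.2 (Set.mem_univ x) (Set.mem_univ z) (by linarith : (0:ℝ) ≤ 1 - t)
        ht0.le (by ring : (1 - t) + t = 1)
      have hz' : f z + r ≤ 0 := hz
      have htb : t * (f x + r) = f x + ε := by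
        rw [htdef, div_mul_cancel₀ _ hb0.ne']
      simp only [smul_eq_mul] at this
      nlinarith [this, mul_le_mul_of_nonneg_left (show f z ≤ -r by linarith [hz']) ht0.le]
    have hdist : dist x y = t * dist x z := by
      rw [dist_eq_norm, dist_eq_norm, hydef]
      have : x - ((1 - t) • x + t • z) = t • (x - z) := by
        rw [smul_sub]; module
      rw [this, norm_smul, Real.norm_eq_abs, abs_of_pos ht0]
    calc infDist x {y : H | f y + ε ≤ 0} ≤ dist x y := infDist_le_dist_of_mem hy
      _ = t * dist x z := hdist
      _ = dist x z * t := mul_comm _ _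
  rw [div_le_div_iff₀ ha0 hb0]
  calc infDist x {y : H | f y + ε ≤ 0} * (f x + r)
      ≤ t * infDist x {y : H | f y + r ≤ 0} * (f x + r) := by
        apply mul_le_mul_of_nonneg_right key hb0.le
    _ = infDist x {y : H | f y + r ≤ 0} * (f x + ε) := by
        rw [htdef]; field_simp
end

section
/- Let C be a nonempty closed convex subset of a real Hilbert space H and for ε ≥ 0 let C^ε := {x ∈ C : B(x,ε) ⊆ C} denote the ε-erosion of C, where B(x,ε) is the closed ball of radius ε. If 0 ≤ ε ≤ r and C^r is nonempty, then for every x ∉ C one has d(x, C^ε)/(d(x,C)+ε) ≤ d(x, C^r)/(d(x,C)+r). -/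
open Metric

/-- Core geometric step: if `c ∈ C`, `y` is a point of the `r`-erosion of `C`, and
`t = (‖x-c‖+ε)/(‖x-c‖+r)`, then `x + t•(y-x)` lies in the `ε`-erosion, so
`infDist x C^ε ≤ t * dist x y`. -/
lemma erosion_core
    {H : Type*} [NormedAddCommGroup H] [NormedSpace ℝ H]
    (C : Set H) (hCconv : Convex ℝ C)
    (ε r : ℝ) (hε : 0 ≤ ε) (hεr : ε ≤ r)
    (x c y : H) (hc : c ∈ C)
    (hy : y ∈ {y ∈ C | ∀ z : H, ‖z - y‖ ≤ r → z ∈ C})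
    (hxc : 0 < ‖x - c‖) :
    infDist x {y ∈ C | ∀ z : H, ‖z - y‖ ≤ ε → z ∈ C} ≤
      (‖x - c‖ + ε) / (‖x - c‖ + r) * dist x y := by
  set D : ℝ := ‖x - c‖ with hD
  have hDr : 0 < D + r := by linarith
  have hDε : 0 < D + ε := by linarith
  set t : ℝ := (D + ε) / (D + r) with htdef
  have ht0 : 0 < t := div_pos hDε hDr
  have ht1 : t ≤ 1 := (div_le_one hDr).2 (by linarith)
  set z : H := x + t • (y - x) with hz
  -- key: the closed ε-ball around z is contained in C
  have key : ∀ w : H, ‖w - z‖ ≤ ε → w ∈ C := by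
    intro w hw
    set u : H := t⁻¹ • (w - z + (1 - t) • (x - c)) with hu
    have hnorm : ‖u‖ ≤ r := by
      have h1 : ‖w - z + (1 - t) • (x - c)‖ ≤ ε + (1 - t) * D := by
        calc ‖w - z + (1 - t) • (x - c)‖ ≤ ‖w - z‖ + ‖(1 - t) • (x - c)‖ := norm_add_le _ _
        _ = ‖w - z‖ + (1 - t) * D := by
            rw [norm_smul, Real.norm_of_nonneg (by linarith)]
        _ ≤ ε + (1 - t) * D := by
            have : 0 ≤ 1 - t := by linarith
            nlinarith [norm_nonneg (x - c)]
      have h2 : ε + (1 - t) * D = r * t := by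
        rw [htdef]; field_simp; ring
      calc ‖u‖ = t⁻¹ * ‖w - z + (1 - t) • (x - c)‖ := by
            rw [hu, norm_smul, Real.norm_of_nonneg (by positivity)]
      _ ≤ t⁻¹ * (r * t) := by
            apply mul_le_mul_of_nonneg_left _ (by positivity)
            rw [← h2]; exact h1
      _ = r := by field_simp
    have hyu : y + u ∈ C := hy.2 (y + u) (by simpa using hnorm)
    have htu : t • u = w - z + (1 - t) • (x - c) := by
      rw [hu, smul_inv_smul₀ ht0.ne']
    have hcomb : w = (1 - t) • c + t • (y + u) := by
      have : (1 - t) • c + t • (y + u) =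
          (1 - t) • c + t • y + t • u := by
        rw [smul_add]; abel
      rw [this, htu, hz]
      have hzz : x + t • (y - x) = (1 - t) • x + t • y := by
        rw [sub_smul, smul_sub, one_smul]; abel
      rw [hzz, smul_sub]
      abel
    rw [hcomb]
    exact hCconv hc hyu (by linarith) ht0.le (by ring)
  have hzmem : z ∈ {y ∈ C | ∀ z : H, ‖z - y‖ ≤ ε → z ∈ C} :=
    ⟨key z (by simpa using hε), key⟩
  calc infDist x {y ∈ C | ∀ z : H, ‖z - y‖ ≤ ε → z ∈ C} ≤ dist x z :=
        infDist_le_dist_of_mem hzmem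
  _ = t * dist x y := by
      rw [dist_eq_norm, dist_eq_norm, hz]
      have : x - (x + t • (y - x)) = t • (x - y) := by
        module
      rw [this, norm_smul, Real.norm_of_nonneg ht0.le]
  _ = (D + ε) / (D + r) * dist x y := by rw [htdef]

theorem erosion_distance_ratio
    {H : Type*} [NormedAddCommGroup H] [InnerProductSpace ℝ H]
    (C : Set H) (hC : C.Nonempty) (hCcl : IsClosed C) (hCconv : Convex ℝ C)
    (ε r : ℝ) (hε : 0 ≤ ε) (hεr : ε ≤ r)
    (hr : ({y ∈ C | ∀ z : H, ‖z - y‖ ≤ r → z ∈ C}).Nonempty)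
    (x : H) (hx : x ∉ C) :
    infDist x {y ∈ C | ∀ z : H, ‖z - y‖ ≤ ε → z ∈ C} / (infDist x C + ε) ≤
      infDist x {y ∈ C | ∀ z : H, ‖z - y‖ ≤ r → z ∈ C} / (infDist x C + r) := by
  set d : ℝ := infDist x C with hd
  have hd0 : 0 < d := (hCcl.notMem_iff_infDist_pos hC).1 hx
  set A : ℝ := infDist x {y ∈ C | ∀ z : H, ‖z - y‖ ≤ ε → z ∈ C} with hA
  set B : ℝ := infDist x {y ∈ C | ∀ z : H, ‖z - y‖ ≤ r → z ∈ C} with hB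
  have hA0 : 0 ≤ A := infDist_nonneg
  -- Step 1: for every y in the r-erosion, A * (d + r) ≤ (d + ε) * dist x y
  have step1 : ∀ y ∈ {y ∈ C | ∀ z : H, ‖z - y‖ ≤ r → z ∈ C},
      A * (d + r) ≤ (d + ε) * dist x y := by
    intro y hy
    have hxy : 0 < dist x y := by
      rw [dist_pos]; rintro rfl; exact hx hy.1
    refine le_of_forall_pos_le_add fun η hη => ?_
    -- choose c ∈ C with dist x c < d + η / dist x y
    obtain ⟨c, hcC, hdist⟩ := (infDist_lt_iff hC).1
      (show infDist x C < d + η / dist x y by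
        rw [← hd]; linarith [div_pos hη hxy])
    have hxc : 0 < ‖x - c‖ := by
      rw [norm_sub_pos_iff]; rintro rfl; exact hx hcC
    have hcore := erosion_core C hCconv ε r hε hεr x c y hcC hy hxc
    rw [← hA] at hcore
    have hDd : d ≤ ‖x - c‖ := by
      rw [← dist_eq_norm] at hxc ⊢; exact infDist_le_dist_of_mem hcC
    set D : ℝ := ‖x - c‖ with hD
    have hDr : 0 < D + r := by linarith
    -- from hcore : A ≤ (D+ε)/(D+r) * dist x y
    have h1 : A * (D + r) ≤ (D + ε) * dist x y := by
      rw [div_mul_eq_mul_div] at hcore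
      calc A * (D + r) ≤ (D + ε) * dist x y / (D + r) * (D + r) := by
            exact mul_le_mul_of_nonneg_right hcore hDr.le
      _ = (D + ε) * dist x y := by field_simp
    have h2 : A * (d + r) ≤ A * (D + r) :=
      mul_le_mul_of_nonneg_left (by linarith) hA0
    have hDub : D < d + η / dist x y := by rwa [dist_eq_norm] at hdist
    have h3 : (D + ε) * dist x y ≤ (d + ε) * dist x y + η := by
      have : (D + ε) * dist x y ≤ (d + η / dist x y + ε) * dist x y :=
        mul_le_mul_of_nonneg_right (by linarith) hxy.le
      calc (D + ε) * dist x y ≤ (d + η / dist x y + ε) * dist x y := this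
      _ = (d + ε) * dist x y + η / dist x y * dist x y := by ring
      _ = (d + ε) * dist x y + η := by rw [div_mul_cancel₀ _ hxy.ne']
    linarith
  -- Step 2: A * (d + r) ≤ (d + ε) * B
  have hdε : 0 < d + ε := by linarith
  have hdr : 0 < d + r := by linarith
  have step2 : A * (d + r) ≤ (d + ε) * B := by
    have : A * (d + r) / (d + ε) ≤ B := by
      refine le_of_not_gt fun hlt => ?_
      obtain ⟨y, hy, hylt⟩ := (infDist_lt_iff hr).1 hlt
      have := step1 y hy
      have h4 : (d + ε) * dist x y < (d + ε) * (A * (d + r) / (d + ε)) :=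
        mul_lt_mul_of_pos_left hylt hdε
      rw [mul_div_cancel₀ _ hdε.ne'] at h4
      linarith
    calc A * (d + r) = A * (d + r) / (d + ε) * (d + ε) := by field_simp
    _ ≤ B * (d + ε) := mul_le_mul_of_nonneg_right this hdε.le
    _ = (d + ε) * B := mul_comm _ _
  rw [div_le_div_iff₀ hdε hdr]
  linarith
end

section
/- Let T : H → H be a cutter with Fix T ≠ ∅, let α ∈ (0,2), let Q ⊆ H be closed and convex with Q ∩ Fix T ≠ ∅, and set U(x) := x + α(T(x) − x). Then the composition P_Q ∘ U is ((2−α)/2)-strongly quasi-nonexpansive and Fix(P_Q ∘ U) = Q ∩ Fix T, where P_Q is the metric projection onto Q. -/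
open RealInnerProductSpace

theorem projected_relaxation_of_cutter
    {H : Type*} [NormedAddCommGroup H] [InnerProductSpace ℝ H]
    (T : H → H) (hfix : ∃ z, T z = z)
    (hcut : ∀ (x z : H), T z = z → ⟪z - T x, x - T x⟫ ≤ 0)
    (α : ℝ) (hα0 : 0 < α) (hα2 : α < 2)
    (Q : Set H) (hQcl : IsClosed Q) (hQconv : Convex ℝ Q)
    (hQfix : (Q ∩ {z : H | T z = z}).Nonempty)
    (PQ : H → H) (hPQmem : ∀ x, PQ x ∈ Q)
    (hPQmin : ∀ x, ∀ w ∈ Q, ‖x - PQ x‖ ≤ ‖x - w‖) :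
    (∀ (x z : H), z ∈ Q → T z = z →
        ‖PQ (x + α • (T x - x)) - z‖ ^ 2 ≤
          ‖x - z‖ ^ 2 - ((2 - α) / 2) * ‖PQ (x + α • (T x - x)) - x‖ ^ 2) ∧
      {z : H | PQ (z + α • (T z - z)) = z} = Q ∩ {z : H | T z = z} := by
  have hα2' : (0:ℝ) < 2 - α := by linarith
  -- variational inequality for the projection
  have hproj : ∀ (y z : H), z ∈ Q → ⟪z - PQ y, y - PQ y⟫ ≤ 0 := by
    intro y z hz
    set p := PQ y with hp
    have hpQ : p ∈ Q := hPQmem y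
    have hkey : ∀ t : ℝ, 0 < t → t ≤ 1 →
        2 * (t * ⟪z - p, y - p⟫) ≤ t ^ 2 * ‖z - p‖ ^ 2 := by
      intro t ht0 ht1
      have hmem : (1 - t) • p + t • z ∈ Q :=
        hQconv hpQ hz (by linarith) (le_of_lt ht0) (by ring)
      have h1 : ‖y - p‖ ≤ ‖y - ((1 - t) • p + t • z)‖ := hPQmin y _ hmem
      have h2 : y - ((1 - t) • p + t • z) = (y - p) - t • (z - p) := by
        module
      have h3 : ‖y - p‖ ^ 2 ≤ ‖(y - p) - t • (z - p)‖ ^ 2 := by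
        rw [← h2]; exact pow_le_pow_left₀ (norm_nonneg _) h1 2
      have h4 : ‖(y - p) - t • (z - p)‖ ^ 2
          = ‖y - p‖ ^ 2 - 2 * (t * ⟪y - p, z - p⟫) + t ^ 2 * ‖z - p‖ ^ 2 := by
        rw [norm_sub_sq_real, real_inner_smul_right, norm_smul,
          Real.norm_eq_abs, abs_of_pos ht0, mul_pow]
      rw [real_inner_comm]
      nlinarith [h3, h4]
    by_contra hcon
    push_neg at hcon
    set c := ⟪z - p, y - p⟫ with hc
    have hz2 : 0 < ‖z - p‖ ^ 2 := by
      have := hkey 1 one_pos le_rfl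
      nlinarith
    set t := min 1 (c / ‖z - p‖ ^ 2) with htdef
    have ht0 : 0 < t := lt_min one_pos (div_pos hcon hz2)
    have ht := hkey t ht0 (min_le_left _ _)
    have hmin : t ≤ c / ‖z - p‖ ^ 2 := min_le_right _ _
    have htc : t * ‖z - p‖ ^ 2 ≤ c := by
      rw [← le_div_iff₀ hz2]; exact hmin
    nlinarith [mul_pos ht0 hcon]
  -- projection is 1-SQNE
  have hPsqne : ∀ (y z : H), z ∈ Q →
      ‖PQ y - z‖ ^ 2 ≤ ‖y - z‖ ^ 2 - ‖PQ y - y‖ ^ 2 := by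
    intro y z hz
    have h := hproj y z hz
    have hexp := norm_add_sq_real (y - PQ y) (PQ y - z)
    have hsum : (y - PQ y) + (PQ y - z) = y - z := by abel
    rw [hsum] at hexp
    have hin : ⟪y - PQ y, PQ y - z⟫ = -⟪z - PQ y, y - PQ y⟫ := by
      rw [show PQ y - z = -(z - PQ y) by abel, inner_neg_right, real_inner_comm]
    have hnn : ‖PQ y - y‖ = ‖y - PQ y‖ := norm_sub_rev _ _
    rw [hin] at hexp
    rw [hnn]
    nlinarith [hexp, h]
  -- chained inequality
  have hchain : ∀ (x z : H), z ∈ Q → T z = z →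
      ‖PQ (x + α • (T x - x)) - z‖ ^ 2 ≤
        ‖x - z‖ ^ 2 - α * (2 - α) * ‖T x - x‖ ^ 2
          - ‖PQ (x + α • (T x - x)) - (x + α • (T x - x))‖ ^ 2 := by
    intro x z hzQ hzT
    have hc := hcut x z hzT
    have hsplit : z - T x = (z - x) + (x - T x) := by abel
    rw [hsplit, inner_add_left, real_inner_self_eq_norm_sq] at hc
    have hflip : ⟪x - z, T x - x⟫ = ⟪z - x, x - T x⟫ := by
      rw [show x - z = -(z - x) by abel, show T x - x = -(x - T x) by abel,
        inner_neg_neg]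
    have hc2 : ⟪x - z, T x - x⟫ ≤ -‖x - T x‖ ^ 2 := by
      rw [hflip]; linarith
    have hU : ‖(x + α • (T x - x)) - z‖ ^ 2 ≤
        ‖x - z‖ ^ 2 - α * (2 - α) * ‖T x - x‖ ^ 2 := by
      have hrw : (x + α • (T x - x)) - z = (x - z) + α • (T x - x) := by abel
      rw [hrw, norm_add_sq_real, real_inner_smul_right, norm_smul,
        Real.norm_eq_abs, abs_of_pos hα0, mul_pow]
      have hn : ‖x - T x‖ = ‖T x - x‖ := norm_sub_rev _ _
      rw [hn] at hc2
      nlinarith [hc2, sq_nonneg ‖T x - x‖]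
    have hP := hPsqne (x + α • (T x - x)) z hzQ
    linarith
  constructor
  · intro x z hzQ hzT
    have h := hchain x z hzQ hzT
    set v := α • (T x - x) with hv
    set b := PQ (x + v) - (x + v) with hb
    have hdecomp : PQ (x + v) - x = v + b := by rw [hb]; abel
    have hexp := norm_add_sq_real v b
    rw [← hdecomp] at hexp
    have hvnorm : ‖v‖ = α * ‖T x - x‖ := by
      rw [hv, norm_smul, Real.norm_eq_abs, abs_of_pos hα0]
    have hin : ⟪v, b⟫ = α * ⟪T x - x, b⟫ := by
      rw [hv, real_inner_smul_left]
    have hCS : ⟪T x - x, b⟫ ≤ ‖T x - x‖ * ‖b‖ := real_inner_le_norm _ _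
    rw [hvnorm, hin] at hexp
    nlinarith [hexp, h,
      mul_nonneg hα0.le (sq_nonneg ((2 - α) * ‖T x - x‖ - ‖b‖)),
      mul_nonneg (mul_nonneg hα0.le hα2'.le) (sub_nonneg.2 hCS)]
  · ext z
    simp only [Set.mem_setOf_eq, Set.mem_inter_iff]
    constructor
    · intro hz
      obtain ⟨w, hwQ, hwT⟩ := hQfix
      have h := hchain z w hwQ hwT
      rw [hz] at h
      have hres : ‖z - (z + α • (T z - z))‖ ^ 2 = α ^ 2 * ‖T z - z‖ ^ 2 := by
        rw [show z - (z + α • (T z - z)) = -(α • (T z - z)) by abel,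
          norm_neg, norm_smul, Real.norm_eq_abs, abs_of_pos hα0, mul_pow]
      rw [hres] at h
      have hTz : ‖T z - z‖ ^ 2 = 0 := by nlinarith [sq_nonneg ‖T z - z‖]
      have hTz' : T z = z := by
        have : ‖T z - z‖ = 0 := by
          have := sq_eq_zero_iff.mp hTz; exact this
        rw [norm_eq_zero, sub_eq_zero] at this; exact this
      refine ⟨?_, hTz'⟩
      rw [← hz]; exact hPQmem _
    · rintro ⟨hzQ, hzT⟩
      have h0 : z + α • (T z - z) = z := by rw [hzT]; simp
      rw [h0]
      have := hPQmin z z hzQ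
      simp only [sub_self, norm_zero] at this
      have hz0 : ‖z - PQ z‖ = 0 := le_antisymm this (norm_nonneg _)
      rw [norm_eq_zero, sub_eq_zero] at hz0
      exact hz0.symm
end

section
/- Let f : H → ℝ be a convex lower semicontinuous function on a real Hilbert space with nonempty sublevel set S := {x : f(x) ≤ 0}, and for each x with f(x) > 0 let g(x) ∈ ∂f(x) be a chosen subgradient. Define the subgradient projection P_f(x) := x − (f(x)/‖g(x)‖²)·g(x) if f(x) > 0 and P_f(x) := x otherwise. Then P_f is a cutter and Fix P_f = S. -/
/-!
If `f x > 0` and `g` is a subgradient at `x`, then every point `z` of the sublevel set satisfies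
`⟪g, z - x⟫ ≤ -f x`, so `S` lies in the half-space `{z | ⟪g, z - x⟫ + f x ≤ 0}`, and `P_f x` is the
metric projection of `x` onto that half-space. A projection onto a closed convex superset of `S` is
a cutter relative to `S`. Fixed points: `P_f x = x` forces `f x ≤ 0`, since otherwise `g x ≠ 0`
(the subgradient inequality at a point of `S` rules out `g x = 0`) and the step is nonzero.
-/

open RealInnerProductSpace

section HalfSpace

variable {H : Type*} [NormedAddCommGroup H] [InnerProductSpace ℝ H]

theorem inner_sub_halfSpaceProj_nonpos {v x z : H} {c : ℝ} (hc : 0 ≤ c)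
    (hz : ⟪v, z - x⟫ + c ≤ 0) :
    ⟪z - (x - (c / ‖v‖ ^ 2) • v), x - (x - (c / ‖v‖ ^ 2) • v)⟫ ≤ 0 := by
  set t := c / ‖v‖ ^ 2
  have ht : 0 ≤ t := by positivity
  -- `t * ‖v‖ ^ 2 = c` unless `v = 0`, in which case `t = 0`
  have hstep : t * (t * ‖v‖ ^ 2) = t * c := by
    rcases eq_or_ne v 0 with rfl | hv
    · simp [t]
    · rw [div_mul_cancel₀ c (by positivity)]
  calc ⟪z - (x - t • v), x - (x - t • v)⟫
      = t * (⟪v, z - x⟫ + c) := by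
        rw [sub_sub_cancel, sub_sub_eq_add_sub, add_sub_right_comm, inner_smul_right,
          inner_add_left, real_inner_smul_left, real_inner_self_eq_norm_sq, real_inner_comm]
        linear_combination hstep
    _ ≤ 0 := mul_nonpos_of_nonneg_of_nonpos ht hz

theorem sub_smul_ne_self {v x : H} {c : ℝ} (hc : c ≠ 0) (hv : v ≠ 0) :
    x - (c / ‖v‖ ^ 2) • v ≠ x := by
  rw [Ne, sub_eq_self, smul_eq_zero, not_or]
  exact ⟨div_ne_zero hc (by positivity), hv⟩

end HalfSpace

theorem ne_zero_of_subgradient_of_lt {H : Type*} [NormedAddCommGroup H] [InnerProductSpace ℝ H]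
    {f : H → ℝ} {v x z : H} (hsub : f x + ⟪v, z - x⟫ ≤ f z) (hlt : f z < f x) : v ≠ 0 := by
  rintro rfl
  rw [inner_zero_left, add_zero] at hsub
  exact hsub.not_gt hlt

theorem subgradient_projection_is_cutter_general
    {H : Type*} [NormedAddCommGroup H] [InnerProductSpace ℝ H]
    (f : H → ℝ)
    (hS : ({x : H | f x ≤ 0}).Nonempty)
    (g : H → H)
    (hg : ∀ x : H, 0 < f x → ∀ y : H, f x + ⟪g x, y - x⟫ ≤ f y) :
    (∀ (x z : H), f z ≤ 0 →
        ⟪z - (if 0 < f x then x - (f x / ‖g x‖ ^ 2) • g x else x),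
          x - (if 0 < f x then x - (f x / ‖g x‖ ^ 2) • g x else x)⟫ ≤ 0) ∧
      {z : H | (if 0 < f z then z - (f z / ‖g z‖ ^ 2) • g z else z) = z} =
        {x : H | f x ≤ 0} := by
  obtain ⟨z₀, hz₀⟩ := hS
  refine ⟨fun x z hz => ?_, Set.ext fun x => ?_⟩
  · split_ifs with hx
    · exact inner_sub_halfSpaceProj_nonpos hx.le (by linarith [hg x hx z])
    · simp
  · simp only [Set.mem_ofPred_eq]
    split_ifs with hx
    · have hgx : g x ≠ 0 := ne_zero_of_subgradient_of_lt (hg x hx z₀) (lt_of_le_of_lt hz₀ hx)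
      exact iff_of_false (sub_smul_ne_self hx.ne' hgx) hx.not_ge
    · exact iff_of_true rfl (not_lt.mp hx)

theorem subgradient_projection_is_cutter
    {H : Type*} [NormedAddCommGroup H] [InnerProductSpace ℝ H]
    (f : H → ℝ) (hconv : ConvexOn ℝ Set.univ f) (hlsc : LowerSemicontinuous f)
    (hS : ({x : H | f x ≤ 0}).Nonempty)
    (g : H → H)
    (hg : ∀ x : H, 0 < f x → ∀ y : H, f x + ⟪g x, y - x⟫ ≤ f y) :
    (∀ (x z : H), f z ≤ 0 →
        ⟪z - (if 0 < f x then x - (f x / ‖g x‖ ^ 2) • g x else x),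
          x - (if 0 < f x then x - (f x / ‖g x‖ ^ 2) • g x else x)⟫ ≤ 0) ∧
      {z : H | (if 0 < f z then z - (f z / ‖g z‖ ^ 2) • g z else z) = z} =
        {x : H | f x ≤ 0} :=
  subgradient_projection_is_cutter_general f hS g hg
end

section
/- Let J be a nonempty index set and {C_j : j ∈ J} a family of closed convex subsets of a real Hilbert space H with nonempty intersection. Suppose there exist j₀ ∈ J, z₀ ∈ C_{j₀}, and r > 0 such that the closed ball B(z₀, r) is contained in ⋂_{j ∈ J∖{j₀}} C_j. Then for every bounded set S ⊆ H, every x ∈ S, and every nonempty subset I ⊆ J, one has d(x, ⋂_{i∈I} C_i) ≤ κ_S · sup_{i∈I} d(x, C_i) with κ_S := 1 + 2·sup_{y∈S}‖y − z₀‖/r. -/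
open Metric

theorem bounded_linear_regularity_of_family
    {H : Type*} [NormedAddCommGroup H] [InnerProductSpace ℝ H]
    {J : Type*} [Nonempty J]
    (C : J → Set H) (hcl : ∀ j, IsClosed (C j)) (hconv : ∀ j, Convex ℝ (C j))
    (hint : (⋂ j, C j).Nonempty)
    (j₀ : J) (z₀ : H) (hz₀ : z₀ ∈ C j₀)
    (r : ℝ) (hr : 0 < r)
    (hball : ∀ z : H, ‖z - z₀‖ ≤ r → ∀ j : J, j ≠ j₀ → z ∈ C j) :
    ∀ S : Set H, Bornology.IsBounded S → ∀ x ∈ S, ∀ I : Set J, I.Nonempty →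
      infDist x (⋂ i ∈ I, C i) ≤
        (1 + 2 * (⨆ y : S, ‖(y : H) - z₀‖) / r) * ⨆ i : I, infDist x (C i) := by
  intro S hS x hxS I hI
  obtain ⟨w, hw⟩ := hint
  rw [Set.mem_iInter] at hw
  have hIne : Nonempty I := hI.to_subtype
  set M : ℝ := ⨆ y : S, ‖(y : H) - z₀‖ with hMdef
  set T : ℝ := ⨆ i : I, infDist x (C i) with hTdef
  have hSb : BddAbove (Set.range fun y : S => ‖(y : H) - z₀‖) := by
    obtain ⟨R, hR⟩ := hS.subset_closedBall z₀
    refine ⟨R, ?_⟩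
    rintro _ ⟨y, rfl⟩
    have := hR y.2
    simpa [dist_eq_norm] using this
  have hMx : ‖x - z₀‖ ≤ M := le_ciSup hSb ⟨x, hxS⟩
  have hM0 : (0:ℝ) ≤ M := le_trans (norm_nonneg _) hMx
  have hTb : BddAbove (Set.range fun i : I => infDist x (C i)) := by
    refine ⟨dist x w, ?_⟩
    rintro _ ⟨i, rfl⟩
    exact infDist_le_dist_of_mem (hw i)
  have hTi : ∀ i ∈ I, infDist x (C i) ≤ T := fun i hi => le_ciSup hTb ⟨i, hi⟩
  have hT0 : (0:ℝ) ≤ T := le_trans infDist_nonneg (hTi _ hI.some_mem)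
  have hc1 : (0:ℝ) < 1 + 2 * M / r := by positivity
  have key : ∀ ε > (0:ℝ), infDist x (⋂ i ∈ I, C i) ≤ (1 + 2 * M / r) * (T + ε) := by
    intro ε hε
    set t' : ℝ := T + ε with ht'def
    have ht' : (0:ℝ) < t' := by positivity
    set lam : ℝ := 2 * t' / (2 * t' + r) with hlamdef
    have hden : (0:ℝ) < 2 * t' + r := by linarith
    have hlam0 : (0:ℝ) ≤ lam := by positivity
    have hlam1 : lam ≤ 1 := by
      rw [hlamdef, div_le_one hden]; linarith
    obtain ⟨c₀, hc₀mem, hc₀d⟩ :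
        ∃ c₀, (j₀ ∈ I → c₀ ∈ C j₀) ∧ dist x c₀ ≤ t' := by
      by_cases hj : j₀ ∈ I
      · have hlt : infDist x (C j₀) < t' :=
          lt_of_le_of_lt (hTi _ hj) (by rw [ht'def]; linarith)
        obtain ⟨c₀, hc₀, hd⟩ := (infDist_lt_iff ⟨w, hw j₀⟩).mp hlt
        exact ⟨c₀, fun _ => hc₀, hd.le⟩
      · exact ⟨x, fun h => absurd h hj, by simp [ht'.le]⟩
    set p : H := (1 - lam) • c₀ + lam • z₀ with hpdef
    have hpmem : p ∈ ⋂ i ∈ I, C i := by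
      simp only [Set.mem_iInter]
      intro i hi
      by_cases hij : i = j₀
      · subst hij
        exact hconv i (hc₀mem hi) hz₀ (by linarith) hlam0 (by ring)
      · have hdi : infDist x (C i) < t' :=
          lt_of_le_of_lt (hTi _ hi) (by rw [ht'def]; linarith)
        obtain ⟨c, hc, hd⟩ := (infDist_lt_iff ⟨w, hw i⟩).mp hdi
        have hcc : ‖c₀ - c‖ ≤ 2 * t' := by
          have h1 : ‖c₀ - c‖ ≤ ‖c₀ - x‖ + ‖x - c‖ := by
            have : c₀ - c = (c₀ - x) + (x - c) := by abel
            rw [this]; exact norm_add_le _ _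
          rw [norm_sub_rev c₀ x] at h1
          rw [dist_eq_norm] at hc₀d hd
          linarith
        set z : H := z₀ + (r / (2 * t')) • (c₀ - c) with hzdef
        have hzr : ‖z - z₀‖ ≤ r := by
          have : z - z₀ = (r / (2 * t')) • (c₀ - c) := by rw [hzdef]; abel
          rw [this, norm_smul, Real.norm_eq_abs, abs_of_nonneg (by positivity)]
          calc r / (2 * t') * ‖c₀ - c‖ ≤ r / (2 * t') * (2 * t') :=
                mul_le_mul_of_nonneg_left hcc (by positivity)
            _ = r := by field_simp
        have hzC : z ∈ C i := hball z hzr i hij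
        have hsc : lam * (r / (2 * t')) = 1 - lam := by
          rw [hlamdef]; field_simp; ring
        have hpeq : p = (1 - lam) • c + lam • z := by
          rw [hpdef, hzdef]
          rw [smul_add, smul_smul, hsc]
          module
        rw [hpeq]
        exact hconv i hc hzC (by linarith) hlam0 (by ring)
    have hxp : dist x p ≤ (1 + 2 * M / r) * t' := by
      have hxpe : x - p = (1 - lam) • (x - c₀) + lam • (x - z₀) := by
        rw [hpdef]; module
      have h1 : ‖x - p‖ ≤ (1 - lam) * ‖x - c₀‖ + lam * ‖x - z₀‖ := by
        rw [hxpe]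
        calc ‖(1 - lam) • (x - c₀) + lam • (x - z₀)‖
            ≤ ‖(1 - lam) • (x - c₀)‖ + ‖lam • (x - z₀)‖ := norm_add_le _ _
          _ = (1 - lam) * ‖x - c₀‖ + lam * ‖x - z₀‖ := by
              rw [norm_smul, norm_smul, Real.norm_eq_abs, Real.norm_eq_abs,
                abs_of_nonneg (by linarith), abs_of_nonneg hlam0]
      have hlamr : lam ≤ 2 * t' / r := by
        rw [hlamdef]
        apply div_le_div_of_nonneg_left (by positivity) hr
        linarith
      have h2 : lam * ‖x - z₀‖ ≤ (2 * t' / r) * M :=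
        mul_le_mul hlamr hMx (norm_nonneg _) (by positivity)
      have h3 : (1 - lam) * ‖x - c₀‖ ≤ t' := by
        rw [dist_eq_norm] at hc₀d
        nlinarith [norm_nonneg (x - c₀)]
      rw [dist_eq_norm]
      have : (2 * t' / r) * M = 2 * M / r * t' := by ring
      nlinarith
    calc infDist x (⋂ i ∈ I, C i) ≤ dist x p := infDist_le_dist_of_mem hpmem
      _ ≤ (1 + 2 * M / r) * t' := hxp
  refine le_of_forall_pos_le_add fun ε hε => ?_
  calc infDist x (⋂ i ∈ I, C i)
      ≤ (1 + 2 * M / r) * (T + ε / (1 + 2 * M / r)) := key _ (by positivity)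
    _ = (1 + 2 * M / r) * T + ε := by
        rw [mul_add, mul_div_cancel₀ _ (ne_of_gt hc1)]
end

section
/- Let {x_k} ⊆ H be quasi-Fejér monotone of type I with respect to a nonempty closed convex set C, i.e., ‖x_{k+1} − z‖ ≤ ‖x_k − z‖ + ε_k for all z ∈ C and all k, with Σ ε_k < ∞. If d(x_k, C) → 0, then {x_k} converges in norm to some point x_∞ ∈ C. -/
open Metric Filter

theorem qf1_norm_convergence
    {H : Type*} [NormedAddCommGroup H] [InnerProductSpace ℝ H] [CompleteSpace H]
    (C : Set H) (hC : C.Nonempty) (hCcl : IsClosed C) (hCconv : Convex ℝ C)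
    (x : ℕ → H) (ε : ℕ → ℝ) (hεpos : ∀ k, 0 < ε k) (hsum : Summable ε)
    (hqf : ∀ z ∈ C, ∀ k : ℕ, ‖x (k + 1) - z‖ ≤ ‖x k - z‖ + ε k)
    (hdist : Tendsto (fun k => infDist (x k) C) atTop (nhds 0)) :
    ∃ xlim ∈ C, Tendsto x atTop (nhds xlim) := by
  -- key inequality : telescoped quasi-Fejér bound
  have key : ∀ z ∈ C, ∀ n m : ℕ, n ≤ m →
      ‖x m - z‖ ≤ ‖x n - z‖ + ∑ k ∈ Finset.Ico n m, ε k := by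
    intro z hz n m hnm
    induction m, hnm using Nat.le_induction with
    | base => simp
    | succ m hnm ih =>
      have := hqf z hz m
      rw [Finset.sum_Ico_succ_top hnm]
      linarith
  -- tail sums tend to 0
  have htail : Tendsto (fun n => ∑' k, ε (k + n)) atTop (nhds 0) :=
    tendsto_sum_nat_add ε
  -- finite blocks are bounded by tails
  have hblock : ∀ n m : ℕ, ∑ k ∈ Finset.Ico n m, ε k ≤ ∑' k, ε (k + n) := by
    intro n m
    rw [Finset.sum_Ico_eq_sum_range]
    have hs : Summable fun k => ε (k + n) := (summable_nat_add_iff n).mpr hsum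
    calc ∑ k ∈ Finset.range (m - n), ε (n + k)
        = ∑ k ∈ Finset.range (m - n), ε (k + n) := by
          simp_rw [Nat.add_comm n]
      _ ≤ ∑' k, ε (k + n) := Summable.sum_le_tsum _ (fun k _ => (hεpos _).le) hs
  -- Cauchy
  have hcauchy : CauchySeq x := by
    rw [Metric.cauchySeq_iff']
    intro δ hδ
    have h4 : 0 < δ / 4 := by linarith
    obtain ⟨N1, hN1⟩ := (htail.eventually (gt_mem_nhds h4)).exists_forall_of_atTop
    obtain ⟨N2, hN2⟩ := (hdist.eventually (gt_mem_nhds h4)).exists_forall_of_atTop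
    set N := max N1 N2 with hN
    have hdN : infDist (x N) C < δ / 4 := hN2 N (le_max_right _ _)
    obtain ⟨z, hz, hzd⟩ := (infDist_lt_iff hC).mp hdN
    refine ⟨N, fun n hn => ?_⟩
    have htN : ∑' k, ε (k + N) < δ / 4 := hN1 N (le_max_left _ _)
    have h1 : ‖x n - z‖ ≤ ‖x N - z‖ + ∑ k ∈ Finset.Ico N n, ε k := key z hz N n hn
    have h2 : ∑ k ∈ Finset.Ico N n, ε k ≤ ∑' k, ε (k + N) := hblock N n
    have hNz : ‖x N - z‖ < δ / 4 := by rwa [← dist_eq_norm]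
    have hnz : ‖x n - z‖ < δ / 2 := by linarith
    calc dist (x n) (x N) ≤ ‖x n - z‖ + ‖x N - z‖ := by
          rw [dist_eq_norm]
          simpa using norm_sub_le (x n - z) (x N - z)
      _ < δ := by linarith
  obtain ⟨xlim, hxlim⟩ := cauchySeq_tendsto_of_complete hcauchy
  have hmem : xlim ∈ C := by
    have hc : Tendsto (fun k => infDist (x k) C) atTop (nhds (infDist xlim C)) :=
      ((continuous_infDist_pt C).continuousAt.tendsto.comp hxlim)
    have : infDist xlim C = 0 := tendsto_nhds_unique hc hdist
    exact (IsClosed.mem_iff_infDist_zero hCcl hC).mpr this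
  exact ⟨xlim, hmem, hxlim⟩
end

section
/- Under the hypotheses of the preceding iteration (cutters W_k with C := ⋂_k Fix W_k ≠ ∅, closed convex Q with C ∩ Q ≠ ∅, α_k ∈ [ε, 2−ε] for some ε ∈ (0,1), Σ‖e_k‖ < ∞, and x_{k+1} := P_Q(x_k + α_k(W_k(x_k) − x_k + e_k))), one has Σ_{k=0}^∞ ‖W_k(x_k) − x_k‖² < ∞ and Σ_{k=0}^∞ ‖x_{k+1} − x_k‖² < ∞. -/
open RealInnerProductSpace

section Aux

variable {H : Type*} [NormedAddCommGroup H] [InnerProductSpace ℝ H]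

lemma proj_vi {Q : Set H} (hQconv : Convex ℝ Q) (PQ : H → H)
    (hPQmem : ∀ x, PQ x ∈ Q) (hPQmin : ∀ x, ∀ w ∈ Q, ‖x - PQ x‖ ≤ ‖x - w‖) (a : H) :
    ∀ w ∈ Q, ⟪a - PQ a, w - PQ a⟫ ≤ 0 := by
  haveI : Nonempty Q := ⟨⟨PQ a, hPQmem a⟩⟩
  have hinf : ‖a - PQ a‖ = ⨅ w : Q, ‖a - (w : H)‖ := by
    refine le_antisymm (le_ciInf fun w => hPQmin a w w.2) ?_
    have hb : BddBelow (Set.range fun w : Q => ‖a - (w : H)‖) :=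
      ⟨0, fun y hy => by obtain ⟨w, rfl⟩ := hy; exact norm_nonneg _⟩
    exact ciInf_le hb ⟨PQ a, hPQmem a⟩
  exact (norm_eq_iInf_iff_real_inner_le_zero hQconv (hPQmem a)).mp hinf

lemma proj_nonexp {Q : Set H} (hQconv : Convex ℝ Q) (PQ : H → H)
    (hPQmem : ∀ x, PQ x ∈ Q) (hPQmin : ∀ x, ∀ w ∈ Q, ‖x - PQ x‖ ≤ ‖x - w‖) (a b : H) :
    ‖PQ a - PQ b‖ ≤ ‖a - b‖ := by
  have h1 := proj_vi hQconv PQ hPQmem hPQmin a (PQ b) (hPQmem b)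
  have h2 := proj_vi hQconv PQ hPQmem hPQmin b (PQ a) (hPQmem a)
  have key : ‖PQ a - PQ b‖ ^ 2 ≤ ⟪a - b, PQ a - PQ b⟫ := by
    have e1 : ⟪a - b, PQ a - PQ b⟫ - ‖PQ a - PQ b‖ ^ 2 =
        -⟪a - PQ a, PQ b - PQ a⟫ - ⟪b - PQ b, PQ a - PQ b⟫ := by
      rw [← real_inner_self_eq_norm_sq]
      simp only [inner_sub_left, inner_sub_right]
      ring
    linarith
  have cs : ⟪a - b, PQ a - PQ b⟫ ≤ ‖a - b‖ * ‖PQ a - PQ b‖ := real_inner_le_norm _ _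
  nlinarith [norm_nonneg (PQ a - PQ b), norm_nonneg (a - b),
    sq_nonneg (‖a - b‖ - ‖PQ a - PQ b‖)]

end Aux

set_option maxHeartbeats 2000000 in
theorem inexact_cutter_iteration_summability
    {H : Type*} [NormedAddCommGroup H] [InnerProductSpace ℝ H]
    (W : ℕ → H → H)
    (hcut : ∀ (k : ℕ) (x z : H), W k z = z → ⟪z - W k x, x - W k x⟫ ≤ 0)
    (hC : (⋂ k : ℕ, {z : H | W k z = z}).Nonempty)
    (Q : Set H) (hQcl : IsClosed Q) (hQconv : Convex ℝ Q)
    (hCQ : ((⋂ k : ℕ, {z : H | W k z = z}) ∩ Q).Nonempty)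
    (ε : ℝ) (hε0 : 0 < ε) (hε1 : ε < 1)
    (α : ℕ → ℝ) (hα : ∀ k, α k ∈ Set.Icc ε (2 - ε))
    (e : ℕ → H) (hsum : Summable (fun k => ‖e k‖))
    (PQ : H → H) (hPQmem : ∀ x, PQ x ∈ Q)
    (hPQmin : ∀ x, ∀ w ∈ Q, ‖x - PQ x‖ ≤ ‖x - w‖)
    (x : ℕ → H)
    (hrec : ∀ k, x (k + 1) = PQ (x k + α k • (W k (x k) - x k + e k))) :
    Summable (fun k => ‖W k (x k) - x k‖ ^ 2) ∧
      Summable (fun k => ‖x (k + 1) - x k‖ ^ 2) := by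
  obtain ⟨z, hzC, hzQ⟩ := hCQ
  have hz : ∀ k, W k z = z := fun k => Set.mem_iInter.mp hzC k
  have hne := proj_nonexp hQconv PQ hPQmem hPQmin
  have hPQfix : ∀ w ∈ Q, PQ w = w := by
    intro w hw
    have h0 : ‖w - PQ w‖ ≤ 0 := by simpa using hPQmin w w hw
    have h1 : w - PQ w = 0 := norm_le_zero_iff.mp h0
    have := sub_eq_zero.mp h1
    exact this.symm
  set S : ℝ := ∑' k, ‖e k‖ with hSdef
  have hS0 : 0 ≤ S := tsum_nonneg fun k => norm_nonneg _
  have heS : ∀ k, ‖e k‖ ≤ S := fun k => Summable.le_tsum hsum k fun j _ => norm_nonneg _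
  set d : ℕ → H := fun k => x k - W k (x k) with hd
  set u : ℕ → H := fun k => x k - α k • d k with hud
  have hu : ∀ k, x (k + 1) = PQ (u k + α k • e k) := by
    intro k
    rw [hrec k]
    congr 1
    simp only [hud, hd, smul_add, smul_sub]
    abel
  -- bounds on α
  have hαb : ∀ k, ε ≤ α k ∧ α k ≤ 2 - ε := fun k => ⟨(hα k).1, (hα k).2⟩
  have hα2 : ∀ k, |α k| ≤ 2 := by
    intro k
    obtain ⟨h1, h2⟩ := hαb k
    exact abs_le.mpr ⟨by linarith, by linarith⟩
  -- key Fejér inequality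
  have key1 : ∀ k, ‖u k - z‖ ^ 2 ≤ ‖x k - z‖ ^ 2 - ε ^ 2 * ‖d k‖ ^ 2 := by
    intro k
    obtain ⟨ht1, ht2⟩ := hαb k
    have hinner : ‖d k‖ ^ 2 ≤ ⟪x k - z, d k⟫ := by
      have h := hcut k (x k) z (hz k)
      have hrw : z - W k (x k) = d k - (x k - z) := by
        simp only [hd]; abel
      have hrw2 : x k - W k (x k) = d k := rfl
      rw [hrw, hrw2, inner_sub_left, real_inner_self_eq_norm_sq] at h
      linarith
    have hexp : ‖(x k - z) - α k • d k‖ ^ 2 =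
        ‖x k - z‖ ^ 2 - 2 * α k * ⟪x k - z, d k⟫ + α k ^ 2 * ‖d k‖ ^ 2 := by
      rw [norm_sub_sq_real, real_inner_smul_right, norm_smul]
      simp [mul_pow, sq_abs]
      ring
    have huz : u k - z = (x k - z) - α k • d k := by
      simp only [hud]; abel
    rw [huz, hexp]
    have h1 : 0 ≤ (α k - ε) * ((2 - ε) - α k) := mul_nonneg (by linarith) (by linarith)
    nlinarith [sq_nonneg ‖d k‖,
      mul_le_mul_of_nonneg_left hinner (le_of_lt (lt_of_lt_of_le hε0 ht1)),
      mul_nonneg h1 (sq_nonneg ‖d k‖),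
      mul_nonneg (mul_nonneg hε0.le (by linarith : (0:ℝ) ≤ 1 - ε)) (sq_nonneg ‖d k‖)]
  have hule : ∀ k, ‖u k - z‖ ≤ ‖x k - z‖ := by
    intro k
    have h := key1 k
    have h2 : ‖u k - z‖ ^ 2 ≤ ‖x k - z‖ ^ 2 := by
      nlinarith [sq_nonneg ‖d k‖, sq_nonneg ε]
    exact le_of_pow_le_pow_left₀ two_ne_zero (norm_nonneg _) h2
  have key2 : ∀ k, ‖x (k + 1) - z‖ ≤ ‖u k - z‖ + 2 * ‖e k‖ := by
    intro k
    rw [hu k]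
    calc ‖PQ (u k + α k • e k) - z‖ = ‖PQ (u k + α k • e k) - PQ z‖ := by
          rw [hPQfix z hzQ]
      _ ≤ ‖u k + α k • e k - z‖ := hne _ _
      _ = ‖(u k - z) + α k • e k‖ := by congr 1; abel
      _ ≤ ‖u k - z‖ + ‖α k • e k‖ := norm_add_le _ _
      _ ≤ ‖u k - z‖ + 2 * ‖e k‖ := by
          rw [norm_smul, Real.norm_eq_abs]
          have h2 := mul_le_mul_of_nonneg_right (hα2 k) (norm_nonneg (e k))
          linarith
  -- uniform bound
  set M : ℝ := ‖x 0 - z‖ + 2 * S with hMdef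
  have hMk : ∀ k, ‖x k - z‖ ≤ ‖x 0 - z‖ + 2 * ∑ j ∈ Finset.range k, ‖e j‖ := by
    intro k
    induction k with
    | zero => simp
    | succ n ih =>
      have h1 := key2 n
      have h2 := hule n
      rw [Finset.sum_range_succ]
      linarith
  have hM : ∀ k, ‖x k - z‖ ≤ M := by
    intro k
    have h := Summable.sum_le_tsum (Finset.range k) (fun i _ => norm_nonneg (e i)) hsum
    have := hMk k
    simp only [hMdef]
    linarith
  have hM0 : 0 ≤ M := le_trans (norm_nonneg _) (hM 0)
  -- one-step estimate
  have key3 : ∀ k, ε ^ 2 * ‖d k‖ ^ 2 ≤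
      (‖x k - z‖ ^ 2 - ‖x (k + 1) - z‖ ^ 2) + (4 * M + 4 * S) * ‖e k‖ := by
    intro k
    have h1 := key1 k
    have h2 := key2 k
    have huM : ‖u k - z‖ ≤ M := (hule k).trans (hM k)
    have he : ‖e k‖ ≤ S := heS k
    have hsq : ‖x (k + 1) - z‖ ^ 2 ≤ (‖u k - z‖ + 2 * ‖e k‖) ^ 2 := by
      apply pow_le_pow_left₀ (norm_nonneg _) h2
    nlinarith [norm_nonneg (e k), norm_nonneg (u k - z),
      mul_le_mul_of_nonneg_left huM (norm_nonneg (e k)),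
      mul_le_mul_of_nonneg_left he (norm_nonneg (e k))]
  -- partial sums bound
  have hSn : ∀ n, ∑ k ∈ Finset.range n, ‖e k‖ ≤ S :=
    fun n => Summable.sum_le_tsum (Finset.range n) (fun i _ => norm_nonneg _) hsum
  have hsum1 : ∀ n, ∑ k ∈ Finset.range n, ‖d k‖ ^ 2 ≤
      (‖x 0 - z‖ ^ 2 + (4 * M + 4 * S) * S) / ε ^ 2 := by
    intro n
    have tele : ∑ k ∈ Finset.range n, (‖x k - z‖ ^ 2 - ‖x (k + 1) - z‖ ^ 2)
        = ‖x 0 - z‖ ^ 2 - ‖x n - z‖ ^ 2 :=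
      Finset.sum_range_sub' (fun k => ‖x k - z‖ ^ 2) n
    have h : ε ^ 2 * ∑ k ∈ Finset.range n, ‖d k‖ ^ 2 ≤
        (‖x 0 - z‖ ^ 2 - ‖x n - z‖ ^ 2) +
          (4 * M + 4 * S) * ∑ k ∈ Finset.range n, ‖e k‖ := by
      rw [Finset.mul_sum, ← tele, Finset.mul_sum, ← Finset.sum_add_distrib]
      exact Finset.sum_le_sum fun k _ => key3 k
    have hε2 : (0:ℝ) < ε ^ 2 := pow_pos hε0 2
    rw [le_div_iff₀ hε2]
    have hcoef : (0:ℝ) ≤ 4 * M + 4 * S := by linarith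
    have := mul_le_mul_of_nonneg_left (hSn n) hcoef
    nlinarith [sq_nonneg ‖x n - z‖]
  have sum1 : Summable fun k => ‖d k‖ ^ 2 :=
    summable_of_sum_range_le (fun n => sq_nonneg _) hsum1
  have goal1 : Summable fun k => ‖W k (x k) - x k‖ ^ 2 := by
    have : (fun k => ‖W k (x k) - x k‖ ^ 2) = fun k => ‖d k‖ ^ 2 := by
      funext k; rw [hd]; rw [norm_sub_rev]
    rw [this]; exact sum1
  -- second summability
  have hsum_e2 : Summable fun k => ‖e k‖ ^ 2 := by
    refine Summable.of_nonneg_of_le (fun k => sq_nonneg _) (fun k => ?_) (hsum.mul_left S)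
    have := heS k
    nlinarith [norm_nonneg (e k)]
  have hQx : ∀ k, x (k + 1) ∈ Q := fun k => by rw [hrec k]; exact hPQmem _
  have hstep : ∀ k, ‖x (k + 1 + 1) - x (k + 1)‖ ^ 2 ≤
      8 * ‖d (k + 1)‖ ^ 2 + 8 * ‖e (k + 1)‖ ^ 2 := by
    intro k
    set m := k + 1 with hm
    have h1 : ‖x (m + 1) - x m‖ ≤ ‖u m + α m • e m - x m‖ := by
      calc ‖x (m + 1) - x m‖ = ‖PQ (u m + α m • e m) - PQ (x m)‖ := by
            rw [hu m, hPQfix (x m) (hQx k)]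
        _ ≤ _ := hne _ _
    have h2 : u m + α m • e m - x m = α m • (e m - d m) := by
      simp only [hud, smul_sub]; abel
    rw [h2] at h1
    have h3 : ‖x (m + 1) - x m‖ ≤ 2 * (‖e m‖ + ‖d m‖) := by
      refine h1.trans ?_
      rw [norm_smul, Real.norm_eq_abs]
      have htri : ‖e m - d m‖ ≤ ‖e m‖ + ‖d m‖ := norm_sub_le _ _
      have h4 := mul_le_mul_of_nonneg_right (hα2 m) (norm_nonneg (e m - d m))
      linarith
    have h4 : ‖x (m + 1) - x m‖ ^ 2 ≤ (2 * (‖e m‖ + ‖d m‖)) ^ 2 :=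
      pow_le_pow_left₀ (norm_nonneg _) h3 2
    have h5 : (2 * (‖e m‖ + ‖d m‖)) ^ 2 ≤ 8 * ‖e m‖ ^ 2 + 8 * ‖d m‖ ^ 2 := by
      nlinarith [sq_nonneg (‖e m‖ - ‖d m‖)]
    linarith
  have sum2' : Summable fun k => ‖x (k + 1 + 1) - x (k + 1)‖ ^ 2 := by
    have A : Summable fun k => ‖d (k + 1)‖ ^ 2 :=
      (summable_nat_add_iff 1).2 sum1
    have B : Summable fun k => ‖e (k + 1)‖ ^ 2 :=
      (summable_nat_add_iff 1).2 hsum_e2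
    exact Summable.of_nonneg_of_le (fun k => sq_nonneg _) hstep
      ((A.mul_left 8).add (B.mul_left 8))
  have goal2 : Summable fun k => ‖x (k + 1) - x k‖ ^ 2 :=
    (summable_nat_add_iff 1).1 sum2'
  exact ⟨goal1, goal2⟩
end

section
/- Let H be a real Hilbert space, I a finite index set, T_i : H → H operators with common point z (z ∈ Fix T_i for all i), each T_i a cutter. Fix R > 0 with ‖x − z‖ ≤ R, convex weights λ_i ∈ [ε,1] with Σ λ_i = 1, and α ∈ [ε, 2−ε] for ε ∈ (0,1). Let W(x) := Σ_i λ_i T_i(x). Then ‖W(x) − x‖ ≥ (ε²/(4R)) · Σ_{i∈I} ‖T_i(x) − x‖²; in particular, if along a bounded sequence (x_k) one has ‖W_k(x_k) − x_k‖ → 0 (with W_k averaging over subsets I_k with weights in [ε,1]), then max_{i∈I_k} ‖T_i(x_k) − x_k‖ → 0. -/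
open RealInnerProductSpace Filter Finset

lemma key_cutter_bound
    {H : Type*} [NormedAddCommGroup H] [InnerProductSpace ℝ H]
    {ι : Type*} (T : ι → H → H) (z : H)
    (hcut : ∀ (i : ι) (x : H), ⟪z - T i x, x - T i x⟫ ≤ 0)
    (ε R : ℝ) (hε0 : 0 ≤ ε) (hR : 0 < R)
    (s : Finset ι) (x : H) (lam : ι → ℝ)
    (hxz : ‖x - z‖ ≤ R)
    (hlam : ∀ i ∈ s, lam i ∈ Set.Icc ε 1)
    (hsum : ∑ i ∈ s, lam i = 1) :
    ε * ∑ i ∈ s, ‖T i x - x‖ ^ 2 ≤ R * ‖(∑ i ∈ s, lam i • T i x) - x‖ := by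
  have h1 : ∀ i, ‖T i x - x‖ ^ 2 ≤ ⟪z - x, T i x - x⟫ := by
    intro i
    have h := hcut i x
    have hd : z - T i x = (z - x) + (x - T i x) := by abel
    rw [hd, inner_add_left, real_inner_self_eq_norm_sq] at h
    have : ⟪z - x, x - T i x⟫ = - ⟪z - x, T i x - x⟫ := by
      rw [← inner_neg_right]; congr 1; abel
    rw [this] at h
    rw [norm_sub_rev]
    linarith
  have hW : (∑ i ∈ s, lam i • T i x) - x = ∑ i ∈ s, lam i • (T i x - x) := by
    simp only [smul_sub, Finset.sum_sub_distrib, ← Finset.sum_smul, hsum, one_smul]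
  calc ε * ∑ i ∈ s, ‖T i x - x‖ ^ 2
      = ∑ i ∈ s, ε * ‖T i x - x‖ ^ 2 := by rw [Finset.mul_sum]
    _ ≤ ∑ i ∈ s, lam i * ⟪z - x, T i x - x⟫ := by
        apply Finset.sum_le_sum
        intro i hi
        have h2 := (hlam i hi).1
        have h3 := h1 i
        nlinarith [sq_nonneg ‖T i x - x‖, hε0]
    _ = ⟪z - x, (∑ i ∈ s, lam i • T i x) - x⟫ := by
        rw [hW, inner_sum]
        simp [real_inner_smul_right]
    _ ≤ ‖z - x‖ * ‖(∑ i ∈ s, lam i • T i x) - x‖ := real_inner_le_norm _ _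
    _ ≤ R * ‖(∑ i ∈ s, lam i • T i x) - x‖ := by
        apply mul_le_mul_of_nonneg_right _ (norm_nonneg _)
        rw [norm_sub_rev]; exact hxz
theorem averaged_cutter_residual_lower_bound
    {H : Type*} [NormedAddCommGroup H] [InnerProductSpace ℝ H]
    {ι : Type*} [Fintype ι] [Nonempty ι]
    (T : ι → H → H) (z : H) (hz : ∀ i, T i z = z)
    (hcut : ∀ (i : ι) (x : H), ⟪z - T i x, x - T i x⟫ ≤ 0)
    (ε R α : ℝ) (hε0 : 0 < ε) (hε1 : ε < 1) (hR : 0 < R)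
    (hα : α ∈ Set.Icc ε (2 - ε)) :
    (∀ (x : H) (lam : ι → ℝ), ‖x - z‖ ≤ R →
        (∀ i, lam i ∈ Set.Icc ε 1) → ∑ i, lam i = 1 →
        ε ^ 2 / (4 * R) * ∑ i, ‖T i x - x‖ ^ 2 ≤
          ‖(∑ i, lam i • T i x) - x‖) ∧
      ∀ (x : ℕ → H) (Ik : ℕ → Finset ι) (lam : ℕ → ι → ℝ)
        (hne : ∀ k, (Ik k).Nonempty),
        (∀ k, ‖x k - z‖ ≤ R) →
        (∀ k, ∀ i ∈ Ik k, lam k i ∈ Set.Icc ε 1) →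
        (∀ k, ∑ i ∈ Ik k, lam k i = 1) →
        Tendsto (fun k => ‖(∑ i ∈ Ik k, lam k i • T i (x k)) - x k‖)
          atTop (nhds 0) →
        Tendsto (fun k => (Ik k).sup' (hne k) (fun i => ‖T i (x k) - x k‖))
          atTop (nhds 0) := by
  constructor
  · intro x lam hxz hlam hsum
    have key := key_cutter_bound T z hcut ε R hε0.le hR Finset.univ x lam hxz
      (fun i _ => hlam i) hsum
    have hS : (0:ℝ) ≤ ∑ i, ‖T i x - x‖ ^ 2 :=
      Finset.sum_nonneg fun i _ => sq_nonneg _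
    have hN : (0:ℝ) ≤ ‖(∑ i, lam i • T i x) - x‖ := norm_nonneg _
    rw [div_mul_eq_mul_div, div_le_iff₀ (by positivity)]
    nlinarith [mul_le_mul_of_nonneg_left key hε0.le, mul_nonneg hR.le hN]
  · intro x Ik lam hne hxz hlam hsum hW
    have key : ∀ k, ε * ∑ i ∈ Ik k, ‖T i (x k) - x k‖ ^ 2 ≤
        R * ‖(∑ i ∈ Ik k, lam k i • T i (x k)) - x k‖ := fun k =>
      key_cutter_bound T z hcut ε R hε0.le hR (Ik k) (x k) (lam k) (hxz k)
        (hlam k) (hsum k)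
    refine tendsto_of_tendsto_of_tendsto_of_le_of_le (g := fun _ => (0:ℝ))
      (h := fun k => Real.sqrt ((R / ε) * ‖(∑ i ∈ Ik k, lam k i • T i (x k)) - x k‖))
      tendsto_const_nhds ?_ ?_ ?_
    · have : Tendsto (fun k => (R / ε) * ‖(∑ i ∈ Ik k, lam k i • T i (x k)) - x k‖)
          atTop (nhds 0) := by
        simpa using hW.const_mul (R / ε)
      simpa using this.sqrt
    · intro k
      obtain ⟨i, hi⟩ := hne k
      exact le_trans (norm_nonneg (T i (x k) - x k))
        (Finset.le_sup' (fun j => ‖T j (x k) - x k‖) hi)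
    · intro k
      apply Finset.sup'_le
      intro i hi
      rw [Real.le_sqrt (norm_nonneg _)]
      have h1 : ‖T i (x k) - x k‖ ^ 2 ≤ ∑ j ∈ Ik k, ‖T j (x k) - x k‖ ^ 2 :=
        Finset.single_le_sum (f := fun j => ‖T j (x k) - x k‖ ^ 2)
          (fun j _ => sq_nonneg _) hi
      have h2 := key k
      rw [div_mul_eq_mul_div, le_div_iff₀ hε0]
      nlinarith [mul_le_mul_of_nonneg_left h1 hε0.le]
      positivity
end
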